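/- Let G be an undirected n-node graph and k, T ∈ ℕ. Consider the (2n+1)×(2n+1) game G'(k,γ) obtained from G(k,γ) by adding an action O for each player, where both players receive utility r := (1 + γT/k)/2 under (O,O), and where if exactly one player plays O that player receives r and the other player receives −r. There exists γ₀ > 0 (depending on n, k, T) such that for all γ ∈ (0, γ₀): if G'(k,γ) admits a uniform T-sparse CCE other than the point mass on (O,O), then G contains a clique of size at least k/(8T). -/
import Mathlib


/-- A probability distribution on a finite type. -/
def IsDist {I : Type*} [Fintype I] (x : I → ℝ) : Prop :=
  (∀ i, 0 ≤ x i) ∧ ∑ i, x i = 1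

/-- `μ` is an `ε`-coarse correlated equilibrium of the game with payoff matrices `R, C`. -/
def IsCCE {I : Type*} [Fintype I] (R C : Matrix I I ℝ) (μ : I → I → ℝ) (ε : ℝ) : Prop :=
  (∀ a' : I, ∑ a, ∑ b, μ a b * R a b ≥ ∑ a, ∑ b, μ a b * R a' b - ε) ∧
  (∀ b' : I, ∑ a, ∑ b, μ a b * C a b ≥ ∑ a, ∑ b, μ a b * C a b' - ε)

/-- The (utilitarian) social welfare of a correlated distribution `μ`. -/
def sw {I : Type*} [Fintype I] (R C : Matrix I I ℝ) (μ : I → I → ℝ) : ℝ :=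
  ∑ a, ∑ b, μ a b * (R a b + C a b)

/-- The adjacency matrix of `G`, with ones on the diagonal:
`A i j = 1` iff `{i, j}` is an edge or `i = j`. -/
def adjMat (n : ℕ) (G : SimpleGraph (Fin n)) [DecidableRel G.Adj] :
    Matrix (Fin n) (Fin n) ℝ :=
  fun i j => if i = j ∨ G.Adj i j then 1 else 0

/-- The row player's payoff matrix of the game `𝒢(k, γ)`:
`R = ½ [[A + γ Iₙ, −k Iₙ], [k Iₙ, 0ₙ]]`. -/
noncomputable def Rmat (n : ℕ) (G : SimpleGraph (Fin n)) [DecidableRel G.Adj]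
    (k : ℕ) (γ : ℝ) : Matrix (Fin n ⊕ Fin n) (Fin n ⊕ Fin n) ℝ :=
  (1 / 2 : ℝ) • Matrix.fromBlocks
    (adjMat n G + γ • (1 : Matrix (Fin n) (Fin n) ℝ))
    ((-(k : ℝ)) • (1 : Matrix (Fin n) (Fin n) ℝ))
    (((k : ℝ)) • (1 : Matrix (Fin n) (Fin n) ℝ))
    (0 : Matrix (Fin n) (Fin n) ℝ)

/-- The column player's payoff matrix of the game `𝒢(k, γ)`:
`C = ½ [[A + γ Iₙ, k Iₙ], [−k Iₙ, 0ₙ]]`. -/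
noncomputable def Cmat (n : ℕ) (G : SimpleGraph (Fin n)) [DecidableRel G.Adj]
    (k : ℕ) (γ : ℝ) : Matrix (Fin n ⊕ Fin n) (Fin n ⊕ Fin n) ℝ :=
  (1 / 2 : ℝ) • Matrix.fromBlocks
    (adjMat n G + γ • (1 : Matrix (Fin n) (Fin n) ℝ))
    (((k : ℝ)) • (1 : Matrix (Fin n) (Fin n) ℝ))
    ((-(k : ℝ)) • (1 : Matrix (Fin n) (Fin n) ℝ))
    (0 : Matrix (Fin n) (Fin n) ℝ)

/-- Row payoff matrix of `𝒢'(k, γ)`: add an action `O` to `𝒢(k, γ)`; both players get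
`r := (1 + γT/k)/2` under `(O, O)`; the player playing `O` alone gets `r` and the other `−r`. -/
noncomputable def Rmat1 (n : ℕ) (G : SimpleGraph (Fin n)) [DecidableRel G.Adj]
    (k T : ℕ) (γ : ℝ) :
    Matrix ((Fin n ⊕ Fin n) ⊕ Unit) ((Fin n ⊕ Fin n) ⊕ Unit) ℝ :=
  fun a b =>
    match a, b with
    | Sum.inl a, Sum.inl b => Rmat n G k γ a b
    | Sum.inr _, Sum.inl _ => (1 + γ * (T : ℝ) / (k : ℝ)) / 2
    | Sum.inl _, Sum.inr _ => -((1 + γ * (T : ℝ) / (k : ℝ)) / 2)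
    | Sum.inr _, Sum.inr _ => (1 + γ * (T : ℝ) / (k : ℝ)) / 2

/-- Column payoff matrix of `𝒢'(k, γ)`. -/
noncomputable def Cmat1 (n : ℕ) (G : SimpleGraph (Fin n)) [DecidableRel G.Adj]
    (k T : ℕ) (γ : ℝ) :
    Matrix ((Fin n ⊕ Fin n) ⊕ Unit) ((Fin n ⊕ Fin n) ⊕ Unit) ℝ :=
  fun a b =>
    match a, b with
    | Sum.inl a, Sum.inl b => Cmat n G k γ a b
    | Sum.inr _, Sum.inl _ => -((1 + γ * (T : ℝ) / (k : ℝ)) / 2)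
    | Sum.inl _, Sum.inr _ => (1 + γ * (T : ℝ) / (k : ℝ)) / 2
    | Sum.inr _, Sum.inr _ => (1 + γ * (T : ℝ) / (k : ℝ)) / 2


/-- If every component of a uniform sparse distribution is the point mass at `o`,
then the distribution is the point mass at `(o, o)`. -/
lemma aux_pointmass {T : ℕ} (hT : 0 < T) {I : Type*} [Fintype I] [DecidableEq I] (o : I)
    (x y : Fin T → I → ℝ) (hx : ∀ t, IsDist (x t)) (hy : ∀ t, IsDist (y t))
    (hxo : ∀ t, x t o = 1) (hyo : ∀ t, y t o = 1) :
    ∀ a b, (1 / (T : ℝ)) * ∑ t, x t a * y t b = if a = o ∧ b = o then (1 : ℝ) else 0 := by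
  have hTR : (0:ℝ) < T := by exact_mod_cast hT
  have hzero : ∀ (z : Fin T → I → ℝ), (∀ t, IsDist (z t)) → (∀ t, z t o = 1) →
      ∀ t a, a ≠ o → z t a = 0 := by
    intro z hz hzo t a ha
    have h1 : ∑ a' ∈ Finset.univ.erase o, z t a' = 0 := by
      have := (hz t).2
      rw [← Finset.sum_erase_add _ _ (Finset.mem_univ o), hzo t] at this
      linarith
    have := (Finset.sum_eq_zero_iff_of_nonneg (fun a' _ => (hz t).1 a')).mp h1 a
      (Finset.mem_erase.mpr ⟨ha, Finset.mem_univ a⟩)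
    exact this
  intro a b
  by_cases hab : a = o ∧ b = o
  · rw [if_pos hab, hab.1, hab.2]
    have : ∀ t : Fin T, x t o * y t o = 1 := fun t => by rw [hxo t, hyo t]; ring
    rw [Finset.sum_congr rfl (fun t _ => this t)]
    simp
    field_simp
  · rw [if_neg hab]
    have : ∀ t : Fin T, x t a * y t b = 0 := by
      intro t
      rcases not_and_or.mp hab with h | h
      · rw [hzero x hx hxo t a h]; ring
      · rw [hzero y hy hyo t b h]; ring
    rw [Finset.sum_congr rfl (fun t _ => this t)]
    simp

set_option maxHeartbeats 4000000 in
/-- for sufficiently small `γ`, any uniform `T`-sparse CCE of `𝒢'(k, γ)` other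
than the point mass on `(O, O)` yields a clique of size at least `k/(8T)` in `G`. -/
theorem stmt14 (n k T : ℕ) (hk : 0 < k) (hT : 0 < T)
    (G : SimpleGraph (Fin n)) [DecidableRel G.Adj] :
    ∃ γ₀ : ℝ, 0 < γ₀ ∧ ∀ γ : ℝ, 0 < γ → γ < γ₀ →
      ∀ x y : Fin T → ((Fin n ⊕ Fin n) ⊕ Unit) → ℝ,
        (∀ t, IsDist (x t)) → (∀ t, IsDist (y t)) →
        IsCCE (Rmat1 n G k T γ) (Cmat1 n G k T γ)
          (fun a b => (1 / (T : ℝ)) * ∑ t, x t a * y t b) 0 →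
        (¬ ∀ a b, (1 / (T : ℝ)) * ∑ t, x t a * y t b
          = (if a = Sum.inr () ∧ b = Sum.inr () then (1 : ℝ) else 0)) →
        ∃ s : Finset (Fin n), G.IsClique (s : Set (Fin n)) ∧
          (k : ℝ) / (8 * (T : ℝ)) ≤ s.card := by
  classical
  have hTR : (0:ℝ) < T := by exact_mod_cast hT
  have hkR : (0:ℝ) < k := by exact_mod_cast hk
  refine ⟨min (min (1/(64*(T:ℝ))) (1/(32*(k:ℝ)*(T:ℝ))))
    (min (1/4) ((T:ℝ)/(512*((k:ℝ))^2*((n:ℝ)+1)^2))), by positivity, ?_⟩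
  intro γ hγ hγ' x y hx hy hCCE hne
  -- trivial case: n = 0
  rcases Nat.eq_zero_or_pos n with hn | hn
  · exfalso
    apply hne
    subst hn
    have hallo : ∀ a : (Fin 0 ⊕ Fin 0) ⊕ Unit, a = Sum.inr () := by
      rintro ((i | i) | ⟨⟩)
      · exact i.elim0
      · exact i.elim0
      · rfl
    have hxo : ∀ t, x t (Sum.inr ()) = 1 := by
      intro t
      have h := (hx t).2
      rw [Fintype.sum_sum_type] at h
      simpa using h
    have hyo : ∀ t, y t (Sum.inr ()) = 1 := by
      intro t
      have h := (hy t).2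
      rw [Fintype.sum_sum_type] at h
      simpa using h
    exact aux_pointmass hT _ x y hx hy hxo hyo
  have hnR : (1:ℝ) ≤ n := by exact_mod_cast hn
  -- trivial case : k ≤ 8T
  rcases le_or_gt (k:ℝ) (8*T) with hk8 | hk8
  · refine ⟨{⟨0, hn⟩}, by simp, ?_⟩
    simp only [Finset.card_singleton, Nat.cast_one]
    rw [div_le_one (by positivity)]
    linarith
    -- MAIN CASE: 1 ≤ n, 8T < k
  have hTk : (T:ℝ) ≤ k := by linarith
  have hb1 := (lt_min_iff.mp hγ').1
  have hb2 := (lt_min_iff.mp hγ').2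
  have hγT64 := (lt_min_iff.mp hb1).1
  have hγ32kT := (lt_min_iff.mp hb1).2
  have hγ4 : γ ≤ 1/4 := ((lt_min_iff.mp hb2).1).le
  have hγ512 := (lt_min_iff.mp hb2).2
  have hγT : γ * T ≤ 1/64 := by
    rw [lt_div_iff₀ (by positivity)] at hγT64
    linarith
  have hγkT : γ * (32*k*T) ≤ 1 := by
    rw [lt_div_iff₀ (by positivity)] at hγ32kT
    nlinarith
  have hγη : γ * (256*k^2*n^2) < T := by
    have hn2 : (0:ℝ) < (n:ℝ)^2 := by positivity
    have h1 : γ < (T:ℝ)/(512*((k:ℝ))^2*((n:ℝ))^2) := by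
      refine lt_of_lt_of_le hγ512 ?_
      apply div_le_div_of_nonneg_left hTR.le (by positivity)
      have : ((n:ℝ))^2 ≤ ((n:ℝ)+1)^2 := by nlinarith
      nlinarith [sq_nonneg (k:ℝ)]
    rw [lt_div_iff₀ (by positivity)] at h1
    nlinarith
    -- basic notation
  set r : ℝ := (1 + γ * (T:ℝ) / (k:ℝ)) / 2 with hrdef
  set μ : ((Fin n ⊕ Fin n) ⊕ Unit) → ((Fin n ⊕ Fin n) ⊕ Unit) → ℝ :=
    fun a b => (1 / (T : ℝ)) * ∑ t, x t a * y t b with hμdef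
  set xg : Fin T → ℝ := fun t => ∑ i, x t (Sum.inl (Sum.inl i)) with hxgdef
  set yg : Fin T → ℝ := fun t => ∑ i, y t (Sum.inl (Sum.inl i)) with hygdef
  set xm : Fin T → ℝ := fun t => ∑ i, x t (Sum.inl (Sum.inr i)) with hxmdef
  set ym : Fin T → ℝ := fun t => ∑ i, y t (Sum.inl (Sum.inr i)) with hymdef
  set xo : Fin T → ℝ := fun t => x t (Sum.inr ()) with hxodef
  set yo : Fin T → ℝ := fun t => y t (Sum.inr ()) with hyodef
  set dg : Fin T → ℝ := fun t => ∑ i, x t (Sum.inl (Sum.inl i)) * y t (Sum.inl (Sum.inl i))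
    with hdgdef
  set SA : Fin T → ℝ := fun t => ∑ i, ∑ j,
    x t (Sum.inl (Sum.inl i)) * y t (Sum.inl (Sum.inl j)) * adjMat n G i j with hSAdef
  set NN : Fin T → ℝ := fun t => ∑ i, ∑ j,
    x t (Sum.inl (Sum.inl i)) * y t (Sum.inl (Sum.inl j)) * (1 - adjMat n G i j) with hNNdef
  have hx0 : ∀ t a, 0 ≤ x t a := fun t => (hx t).1
  have hy0 : ∀ t a, 0 ≤ y t a := fun t => (hy t).1
  have hx1 : ∀ t a, x t a ≤ 1 := by
    intro t a
    calc x t a ≤ ∑ a', x t a' := Finset.single_le_sum (fun a' _ => hx0 t a') (Finset.mem_univ a)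
    _ = 1 := (hx t).2
  have hy1 : ∀ t a, y t a ≤ 1 := by
    intro t a
    calc y t a ≤ ∑ a', y t a' := Finset.single_le_sum (fun a' _ => hy0 t a') (Finset.mem_univ a)
    _ = 1 := (hy t).2
  have hA0 : ∀ i j, 0 ≤ adjMat n G i j := by
    intro i j; unfold adjMat; split_ifs <;> norm_num
  have hA1 : ∀ i j, adjMat n G i j ≤ 1 := by
    intro i j; unfold adjMat; split_ifs <;> norm_num
  have hxsplit : ∀ t, xg t + xm t + xo t = 1 := by
    intro t
    have h := (hx t).2
    rw [Fintype.sum_sum_type, Fintype.sum_sum_type] at h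
    simpa [hxgdef, hxmdef, hxodef] using h
  have hysplit : ∀ t, yg t + ym t + yo t = 1 := by
    intro t
    have h := (hy t).2
    rw [Fintype.sum_sum_type, Fintype.sum_sum_type] at h
    simpa [hygdef, hymdef, hyodef] using h
  have hxg0 : ∀ t, 0 ≤ xg t := fun t => Finset.sum_nonneg (fun i _ => hx0 t _)
  have hyg0 : ∀ t, 0 ≤ yg t := fun t => Finset.sum_nonneg (fun i _ => hy0 t _)
  have hxm0 : ∀ t, 0 ≤ xm t := fun t => Finset.sum_nonneg (fun i _ => hx0 t _)
  have hym0 : ∀ t, 0 ≤ ym t := fun t => Finset.sum_nonneg (fun i _ => hy0 t _)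
  have hxo0 : ∀ t, 0 ≤ xo t := fun t => hx0 t _
  have hyo0 : ∀ t, 0 ≤ yo t := fun t => hy0 t _
  have hxg1 : ∀ t, xg t ≤ 1 := by intro t; have := hxsplit t; have := hxm0 t; have := hxo0 t; linarith
  have hyg1 : ∀ t, yg t ≤ 1 := by intro t; have := hysplit t; have := hym0 t; have := hyo0 t; linarith
  have hxo1 : ∀ t, xo t ≤ 1 - xg t := by
    intro t; have := hxsplit t; have := hxm0 t; linarith
  have hyo1 : ∀ t, yo t ≤ 1 - yg t := by
    intro t; have := hysplit t; have := hym0 t; linarith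
  have hxixg : ∀ t i, x t (Sum.inl (Sum.inl i)) ≤ xg t := by
    intro t i
    rw [hxgdef]
    exact Finset.single_le_sum (fun i' _ => hx0 t (Sum.inl (Sum.inl i'))) (Finset.mem_univ i)
  have hyiyg : ∀ t i, y t (Sum.inl (Sum.inl i)) ≤ yg t := by
    intro t i
    rw [hygdef]
    exact Finset.single_le_sum (fun i' _ => hy0 t (Sum.inl (Sum.inl i'))) (Finset.mem_univ i)
  have hdg0 : ∀ t, 0 ≤ dg t :=
    fun t => Finset.sum_nonneg (fun i _ => mul_nonneg (hx0 t _) (hy0 t _))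
  have hdgxg : ∀ t, dg t ≤ xg t := by
    intro t
    rw [hdgdef, hxgdef]
    exact Finset.sum_le_sum (fun i _ => by
      nlinarith [hx0 t (Sum.inl (Sum.inl i)), hy0 t (Sum.inl (Sum.inl i)),
        hy1 t (Sum.inl (Sum.inl i))])
  have hdgyg : ∀ t, dg t ≤ yg t := by
    intro t
    rw [hdgdef, hygdef]
    exact Finset.sum_le_sum (fun i _ => by
      nlinarith [hx0 t (Sum.inl (Sum.inl i)), hy0 t (Sum.inl (Sum.inl i)),
        hx1 t (Sum.inl (Sum.inl i))])
  have hdggg : ∀ t, dg t ≤ xg t * yg t := by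
    intro t
    calc dg t ≤ ∑ i, x t (Sum.inl (Sum.inl i)) * yg t := by
          rw [hdgdef]
          exact Finset.sum_le_sum (fun i _ =>
            mul_le_mul_of_nonneg_left (hyiyg t i) (hx0 t _))
    _ = xg t * yg t := by rw [hxgdef, ← Finset.sum_mul]
  have hggsum : ∀ t, (∑ i, ∑ j, x t (Sum.inl (Sum.inl i)) * y t (Sum.inl (Sum.inl j)))
      = xg t * yg t := by
    intro t
    rw [hxgdef, hygdef, Finset.sum_mul_sum]
  have hSA0 : ∀ t, 0 ≤ SA t := by
    intro t
    exact Finset.sum_nonneg fun i _ => Finset.sum_nonneg fun j _ =>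
      mul_nonneg (mul_nonneg (hx0 t _) (hy0 t _)) (hA0 i j)
  have hSAgg : ∀ t, SA t ≤ xg t * yg t := by
    intro t
    rw [← hggsum t, hSAdef]
    refine Finset.sum_le_sum fun i _ => Finset.sum_le_sum fun j _ => ?_
    nlinarith [hA1 i j, mul_nonneg (hx0 t (Sum.inl (Sum.inl i))) (hy0 t (Sum.inl (Sum.inl j))),
      hA0 i j]
  have hNNeq : ∀ t, NN t = xg t * yg t - SA t := by
    intro t
    rw [hNNdef, hSAdef, ← hggsum t, ← Finset.sum_sub_distrib]
    refine Finset.sum_congr rfl fun i _ => ?_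
    rw [← Finset.sum_sub_distrib]
    exact Finset.sum_congr rfl fun j _ => by ring
  have hNN0 : ∀ t, 0 ≤ NN t := by
    intro t
    exact Finset.sum_nonneg fun i _ => Finset.sum_nonneg fun j _ =>
      mul_nonneg (mul_nonneg (hx0 t _) (hy0 t _)) (by nlinarith [hA1 i j])
  have hxoyo : ∀ t, xo t * yo t ≤ (1 - xg t) * (1 - yg t) := by
    intro t
    exact mul_le_mul (hxo1 t) (hyo1 t) (hyo0 t) (by nlinarith [hxg1 t])
    -- matrix entry values
  have hROb : ∀ b, Rmat1 n G k T γ (Sum.inr ()) b = r := by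
    rintro (z | u) <;> rfl
  have hCaO : ∀ a, Cmat1 n G k T γ a (Sum.inr ()) = r := by
    rintro (z | u) <;> rfl
  have hW11 : ∀ i j, Rmat1 n G k T γ (Sum.inl (Sum.inl i)) (Sum.inl (Sum.inl j))
      + Cmat1 n G k T γ (Sum.inl (Sum.inl i)) (Sum.inl (Sum.inl j))
      = adjMat n G i j + (if i = j then γ else 0) := by
    intro i j
    show Rmat n G k γ (Sum.inl i) (Sum.inl j) + Cmat n G k γ (Sum.inl i) (Sum.inl j) = _
    simp only [Rmat, Cmat, Matrix.smul_apply, Matrix.fromBlocks_apply₁₁, Matrix.add_apply,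
      Matrix.smul_apply, Matrix.one_apply, smul_eq_mul]
    split_ifs <;> ring
  have hW12 : ∀ i j, Rmat1 n G k T γ (Sum.inl (Sum.inl i)) (Sum.inl (Sum.inr j))
      + Cmat1 n G k T γ (Sum.inl (Sum.inl i)) (Sum.inl (Sum.inr j)) = 0 := by
    intro i j
    show Rmat n G k γ (Sum.inl i) (Sum.inr j) + Cmat n G k γ (Sum.inl i) (Sum.inr j) = _
    simp only [Rmat, Cmat, Matrix.smul_apply, Matrix.fromBlocks_apply₁₂,
      Matrix.smul_apply, Matrix.one_apply, smul_eq_mul]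
    split_ifs <;> ring
  have hW21 : ∀ i j, Rmat1 n G k T γ (Sum.inl (Sum.inr i)) (Sum.inl (Sum.inl j))
      + Cmat1 n G k T γ (Sum.inl (Sum.inr i)) (Sum.inl (Sum.inl j)) = 0 := by
    intro i j
    show Rmat n G k γ (Sum.inr i) (Sum.inl j) + Cmat n G k γ (Sum.inr i) (Sum.inl j) = _
    simp only [Rmat, Cmat, Matrix.smul_apply, Matrix.fromBlocks_apply₂₁,
      Matrix.smul_apply, Matrix.one_apply, smul_eq_mul]
    split_ifs <;> ring
  have hW22 : ∀ i j, Rmat1 n G k T γ (Sum.inl (Sum.inr i)) (Sum.inl (Sum.inr j))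
      + Cmat1 n G k T γ (Sum.inl (Sum.inr i)) (Sum.inl (Sum.inr j)) = 0 := by
    intro i j
    show Rmat n G k γ (Sum.inr i) (Sum.inr j) + Cmat n G k γ (Sum.inr i) (Sum.inr j) = _
    simp [Rmat, Cmat, Matrix.fromBlocks_apply₂₂]
  have hW1O : ∀ z : Fin n ⊕ Fin n, Rmat1 n G k T γ (Sum.inl z) (Sum.inr ())
      + Cmat1 n G k T γ (Sum.inl z) (Sum.inr ()) = 0 := by
    intro z
    show -((1 + γ * (T : ℝ) / (k : ℝ)) / 2) + (1 + γ * (T : ℝ) / (k : ℝ)) / 2 = 0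
    ring
  have hWO1 : ∀ z : Fin n ⊕ Fin n, Rmat1 n G k T γ (Sum.inr ()) (Sum.inl z)
      + Cmat1 n G k T γ (Sum.inr ()) (Sum.inl z) = 0 := by
    intro z
    show (1 + γ * (T : ℝ) / (k : ℝ)) / 2 + -((1 + γ * (T : ℝ) / (k : ℝ)) / 2) = 0
    ring
  have hWOO : Rmat1 n G k T γ (Sum.inr ()) (Sum.inr ())
      + Cmat1 n G k T γ (Sum.inr ()) (Sum.inr ()) = 2 * r := by
    show (1 + γ * (T : ℝ) / (k : ℝ)) / 2 + (1 + γ * (T : ℝ) / (k : ℝ)) / 2 = 2 * r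
    rw [hrdef]; ring
  have hRd1 : ∀ i j, Rmat1 n G k T γ (Sum.inl (Sum.inr i)) (Sum.inl (Sum.inl j))
      = if i = j then (k:ℝ)/2 else 0 := by
    intro i j
    show Rmat n G k γ (Sum.inr i) (Sum.inl j) = _
    simp only [Rmat, Matrix.smul_apply, Matrix.fromBlocks_apply₂₁,
      Matrix.smul_apply, Matrix.one_apply, smul_eq_mul]
    split_ifs <;> ring
  have hRd2 : ∀ i j, Rmat1 n G k T γ (Sum.inl (Sum.inr i)) (Sum.inl (Sum.inr j)) = 0 := by
    intro i j
    show Rmat n G k γ (Sum.inr i) (Sum.inr j) = _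
    simp [Rmat, Matrix.fromBlocks_apply₂₂]
  have hRdO : ∀ i : Fin n, Rmat1 n G k T γ (Sum.inl (Sum.inr i)) (Sum.inr ()) = -r := by
    intro i; rfl
  have hCd1 : ∀ i j, Cmat1 n G k T γ (Sum.inl (Sum.inl j)) (Sum.inl (Sum.inr i))
      = if j = i then (k:ℝ)/2 else 0 := by
    intro i j
    show Cmat n G k γ (Sum.inl j) (Sum.inr i) = _
    simp only [Cmat, Matrix.smul_apply, Matrix.fromBlocks_apply₁₂,
      Matrix.smul_apply, Matrix.one_apply, smul_eq_mul]
    split_ifs <;> ring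
  have hCd2 : ∀ i j, Cmat1 n G k T γ (Sum.inl (Sum.inr j)) (Sum.inl (Sum.inr i)) = 0 := by
    intro i j
    show Cmat n G k γ (Sum.inr j) (Sum.inr i) = _
    simp [Cmat, Matrix.fromBlocks_apply₂₂]
  have hCdO : ∀ i : Fin n, Cmat1 n G k T γ (Sum.inr ()) (Sum.inl (Sum.inr i)) = -r := by
    intro i; rfl
  -- sum swap
  have hμswap : ∀ V : ((Fin n ⊕ Fin n) ⊕ Unit) → ((Fin n ⊕ Fin n) ⊕ Unit) → ℝ,
      (∑ a, ∑ b, μ a b * V a b)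
        = (1/(T:ℝ)) * ∑ t, ∑ a, ∑ b, x t a * y t b * V a b := by
    intro V
    rw [hμdef]
    calc ∑ a, ∑ b, ((1 / (T : ℝ)) * ∑ t, x t a * y t b) * V a b
        = ∑ a, ∑ b, (1/(T:ℝ)) * ∑ t, x t a * y t b * V a b := by
          refine Finset.sum_congr rfl fun a _ => Finset.sum_congr rfl fun b _ => ?_
          rw [mul_assoc, Finset.sum_mul]
      _ = (1/(T:ℝ)) * ∑ a, ∑ b, ∑ t, x t a * y t b * V a b := by
          simp only [← Finset.mul_sum]
      _ = (1/(T:ℝ)) * ∑ t, ∑ a, ∑ b, x t a * y t b * V a b := by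
          congr 1
          rw [show (∑ a, ∑ b, ∑ t, x t a * y t b * V a b)
              = ∑ a, ∑ t, ∑ b, x t a * y t b * V a b from
            Finset.sum_congr rfl fun a _ => Finset.sum_comm, Finset.sum_comm]
  have hTot : (∑ a, ∑ b, μ a b) = 1 := by
    have h := hμswap (fun _ _ => 1)
    simp only [mul_one] at h
    rw [h]
    have h2 : ∀ t : Fin T, (∑ a, ∑ b, x t a * y t b) = 1 := by
      intro t
      rw [← Finset.sum_mul_sum, (hx t).2, (hy t).2, one_mul]
    rw [Finset.sum_congr rfl (fun t _ => h2 t)]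
    simp
    field_simp
  -- K1, K2 : value of the CCE is at least r
  have K1 : r ≤ ∑ a, ∑ b, μ a b * Rmat1 n G k T γ a b := by
    have h := hCCE.1 (Sum.inr ())
    have h2 : (∑ a, ∑ b, μ a b * Rmat1 n G k T γ (Sum.inr ()) b) = r := by
      calc ∑ a, ∑ b, μ a b * Rmat1 n G k T γ (Sum.inr ()) b
          = ∑ a, ∑ b, μ a b * r :=
            Finset.sum_congr rfl fun a _ => Finset.sum_congr rfl fun b _ => by rw [hROb b]
        _ = (∑ a, ∑ b, μ a b) * r := by simp only [Finset.sum_mul]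
        _ = r := by rw [hTot, one_mul]
    rw [h2, sub_zero] at h
    exact h
  have K2 : r ≤ ∑ a, ∑ b, μ a b * Cmat1 n G k T γ a b := by
    have h := hCCE.2 (Sum.inr ())
    have h2 : (∑ a, ∑ b, μ a b * Cmat1 n G k T γ a (Sum.inr ())) = r := by
      calc ∑ a, ∑ b, μ a b * Cmat1 n G k T γ a (Sum.inr ())
          = ∑ a, ∑ b, μ a b * r :=
            Finset.sum_congr rfl fun a _ => Finset.sum_congr rfl fun b _ => by rw [hCaO a]
        _ = (∑ a, ∑ b, μ a b) * r := by simp only [Finset.sum_mul]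
        _ = r := by rw [hTot, one_mul]
    rw [h2, sub_zero] at h
    exact h
    -- K3 : welfare identity
  have K3 : (∑ a, ∑ b, μ a b * Rmat1 n G k T γ a b) + (∑ a, ∑ b, μ a b * Cmat1 n G k T γ a b)
      = (1/(T:ℝ)) * ∑ t, (SA t + γ * dg t + (2*r) * (xo t * yo t)) := by
    have h1 : (∑ a, ∑ b, μ a b * Rmat1 n G k T γ a b)
        + (∑ a, ∑ b, μ a b * Cmat1 n G k T γ a b)
        = ∑ a, ∑ b, μ a b * (Rmat1 n G k T γ a b + Cmat1 n G k T γ a b) := by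
      simp only [← Finset.sum_add_distrib, ← mul_add]
    rw [h1, hμswap (fun a b => Rmat1 n G k T γ a b + Cmat1 n G k T γ a b)]
    congr 1
    refine Finset.sum_congr rfl fun t _ => ?_
    simp only [Fintype.sum_sum_type, Fintype.sum_unique]
    simp only [hW11, hW12, hW21, hW22, hW1O, hWO1, hWOO, mul_zero, Finset.sum_const_zero,
      add_zero, zero_add]
    simp only [mul_add, Finset.sum_add_distrib, mul_ite, mul_zero, Finset.sum_ite_eq,
      Finset.mem_univ, if_true]
    rw [hSAdef, hdgdef, hxodef, hyodef, Finset.mul_sum]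
    have hdef : (default : Unit) = () := rfl
    simp only [hdef]
    have e1 : ∀ i : Fin n, γ * (x t (Sum.inl (Sum.inl i)) * y t (Sum.inl (Sum.inl i)))
        = x t (Sum.inl (Sum.inl i)) * y t (Sum.inl (Sum.inl i)) * γ := fun i => by ring
    rw [Finset.sum_congr rfl (fun i _ => e1 i)]
    ring
  -- K4 : row deviation to the matching action i
  have K4 : ∀ i : Fin n, (1/(T:ℝ)) * (∑ t, ((k:ℝ)/2 * y t (Sum.inl (Sum.inl i)) - r * yo t))
      ≤ ∑ a, ∑ b, μ a b * Rmat1 n G k T γ a b := by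
    intro i
    have h := hCCE.1 (Sum.inl (Sum.inr i))
    rw [sub_zero] at h
    refine le_trans (le_of_eq ?_) h
    rw [hμswap (fun _ b => Rmat1 n G k T γ (Sum.inl (Sum.inr i)) b)]
    congr 1
    refine Finset.sum_congr rfl fun t _ => ?_
    have hinner : (∑ b, y t b * Rmat1 n G k T γ (Sum.inl (Sum.inr i)) b)
        = (k:ℝ)/2 * y t (Sum.inl (Sum.inl i)) - r * yo t := by
      simp only [Fintype.sum_sum_type, Fintype.sum_unique]
      simp only [hRd1, hRd2, hRdO, mul_zero, Finset.sum_const_zero, add_zero,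
        mul_ite, Finset.sum_ite_eq, Finset.mem_univ, if_true]
      rw [hyodef]
      ring
    have hbsum : ∀ a, (∑ b, x t a * y t b * Rmat1 n G k T γ (Sum.inl (Sum.inr i)) b)
        = x t a * ((k:ℝ)/2 * y t (Sum.inl (Sum.inl i)) - r * yo t) := by
      intro a
      rw [← hinner, Finset.mul_sum]
      exact Finset.sum_congr rfl fun b _ => by ring
    rw [Finset.sum_congr rfl (fun a _ => hbsum a), ← Finset.sum_mul, (hx t).2, one_mul]
  -- K5 : column deviation to the matching action i
  have K5 : ∀ i : Fin n, (1/(T:ℝ)) * (∑ t, ((k:ℝ)/2 * x t (Sum.inl (Sum.inl i)) - r * xo t))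
      ≤ ∑ a, ∑ b, μ a b * Cmat1 n G k T γ a b := by
    intro i
    have h := hCCE.2 (Sum.inl (Sum.inr i))
    rw [sub_zero] at h
    refine le_trans (le_of_eq ?_) h
    rw [hμswap (fun a _ => Cmat1 n G k T γ a (Sum.inl (Sum.inr i)))]
    congr 1
    refine Finset.sum_congr rfl fun t _ => ?_
    have hbsum : ∀ a, (∑ b, x t a * y t b * Cmat1 n G k T γ a (Sum.inl (Sum.inr i)))
        = x t a * Cmat1 n G k T γ a (Sum.inl (Sum.inr i)) := by
      intro a
      have : ∀ b, x t a * y t b * Cmat1 n G k T γ a (Sum.inl (Sum.inr i))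
          = y t b * (x t a * Cmat1 n G k T γ a (Sum.inl (Sum.inr i))) := fun b => by ring
      rw [Finset.sum_congr rfl (fun b _ => this b), ← Finset.sum_mul, (hy t).2, one_mul]
    rw [Finset.sum_congr rfl (fun a _ => hbsum a)]
    simp only [Fintype.sum_sum_type, Fintype.sum_unique]
    simp only [hCd1, hCd2, hCdO, mul_zero, Finset.sum_const_zero, add_zero,
      mul_ite, Finset.sum_ite_eq', Finset.mem_univ, if_true]
    rw [hxodef]
    ring
    -- aggregate quantities
  set ER : ℝ := ∑ a, ∑ b, μ a b * Rmat1 n G k T γ a b with hERdef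
  set EC : ℝ := ∑ a, ∑ b, μ a b * Cmat1 n G k T γ a b with hECdef
  set Sp : ℝ := ∑ t, SA t with hSpdef
  set Dp : ℝ := ∑ t, dg t with hDpdef
  set Pp : ℝ := ∑ t, xo t * yo t with hPpdef
  set Mgg : ℝ := ∑ t, xg t * yg t with hMggdef
  set Np : ℝ := ∑ t, NN t with hNpdef
  have hr0 : (1:ℝ)/2 ≤ r := by
    have h0 : 0 ≤ γ * (T:ℝ) / k := by positivity
    rw [hrdef]
    linarith only [h0]
  have h2r1 : (1:ℝ) ≤ 2*r := by linarith only [hr0]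
  have h2r : 2*r ≤ 1 + γ := by
    have h1 : γ * (T:ℝ) ≤ γ * k := mul_le_mul_of_nonneg_left hTk hγ.le
    have h2 : γ * (T:ℝ) / k ≤ γ := by
      rw [div_le_iff₀ hkR]
      linarith only [h1]
    rw [hrdef]
    linarith only [h2]
  have hrk : (k:ℝ)*(2*r-1) = γ*T := by
    rw [hrdef]
    field_simp
    ring
  have hTcancel : ∀ X : ℝ, (T:ℝ) * ((1/(T:ℝ)) * X) = X := fun X => by field_simp
  have hsum3 : (∑ t, (SA t + γ * dg t + (2*r) * (xo t * yo t)))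
      = Sp + γ*Dp + 2*r*Pp := by
    rw [Finset.sum_add_distrib, Finset.sum_add_distrib, hSpdef, hDpdef, hPpdef,
      ← Finset.mul_sum, ← Finset.mul_sum]
  -- G1 : welfare lower bound
  have G1 : 2*r*T ≤ Sp + γ*Dp + 2*r*Pp := by
    have h2 : 2*r ≤ (1/(T:ℝ)) * (Sp + γ*Dp + 2*r*Pp) := by
      rw [← hsum3, ← K3]
      linarith only [K1, K2]
    have h3 := mul_le_mul_of_nonneg_left h2 hTR.le
    rw [hTcancel] at h3
    linarith only [h3]
  -- simple aggregate facts
  have hgg1 : ∀ t, xg t * yg t + xo t * yo t ≤ 1 := by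
    intro t
    have e1 := mul_nonneg (hxg0 t) (sub_nonneg.mpr (hyg1 t))
    have e2 := mul_nonneg (hyg0 t) (sub_nonneg.mpr (hxg1 t))
    nlinarith only [hxoyo t, e1, e2]
  have hsumT : (∑ _t : Fin T, (1:ℝ)) = T := by simp
  have hMggPp : Mgg + Pp ≤ T := by
    rw [hMggdef, hPpdef, ← Finset.sum_add_distrib, ← hsumT]
    exact Finset.sum_le_sum fun t _ => hgg1 t
  have hMgg0 : 0 ≤ Mgg := Finset.sum_nonneg fun t _ => mul_nonneg (hxg0 t) (hyg0 t)
  have hPp0 : 0 ≤ Pp := Finset.sum_nonneg fun t _ => mul_nonneg (hxo0 t) (hyo0 t)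
  have hSp0 : 0 ≤ Sp := Finset.sum_nonneg fun t _ => hSA0 t
  have hDp0 : 0 ≤ Dp := Finset.sum_nonneg fun t _ => hdg0 t
  have hNp0 : 0 ≤ Np := Finset.sum_nonneg fun t _ => hNN0 t
  have hSpMgg : Sp ≤ Mgg := Finset.sum_le_sum fun t _ => hSAgg t
  have hDpMgg : Dp ≤ Mgg := Finset.sum_le_sum fun t _ => hdggg t
  have hMggT : Mgg ≤ T := by linarith only [hMggPp, hPp0]
  have hPpT : Pp ≤ T := by linarith only [hMggPp, hMgg0]
  have hDpT : Dp ≤ T := by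
    rw [hDpdef, ← hsumT]
    exact Finset.sum_le_sum fun t _ => le_trans (hdgxg t) (hxg1 t)
  have hNpeq : Np = Mgg - Sp := by
    rw [hNpdef, hMggdef, hSpdef, ← Finset.sum_sub_distrib]
    exact Finset.sum_congr rfl fun t _ => hNNeq t
  -- G2 : value upper bounds
  have hWup : ER + EC ≤ 1 + γ := by
    have p1 : γ*Dp ≤ γ*Mgg := mul_le_mul_of_nonneg_left hDpMgg hγ.le
    have p2 : 2*r*Pp ≤ (1+γ)*Pp := mul_le_mul_of_nonneg_right h2r hPp0
    have p3 : (1+γ)*(Mgg+Pp) ≤ (1+γ)*T :=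
      mul_le_mul_of_nonneg_left hMggPp (by linarith only [hγ])
    have h1 : Sp + γ*Dp + 2*r*Pp ≤ (1+γ)*(T:ℝ) := by
      linarith only [hSpMgg, p1, p2, p3]
    have h2 : ER + EC ≤ (1/(T:ℝ)) * ((1+γ)*T) := by
      rw [K3, hsum3]
      apply mul_le_mul_of_nonneg_left h1 (by positivity)
    have e : (1/(T:ℝ))*((1+γ)*(T:ℝ)) = 1+γ := by field_simp
    rw [e] at h2
    exact h2
  have G2R : ER ≤ 1 + γ - r := by linarith only [hWup, K2]
  have G2C : EC ≤ 1 + γ - r := by linarith only [hWup, K1]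
  -- G3 : aggregate marginal bounds
  have hyoT : (∑ t, yo t) ≤ T := by
    rw [← hsumT]; exact Finset.sum_le_sum fun t _ => hy1 t _
  have hxoT : (∑ t, xo t) ≤ T := by
    rw [← hsumT]; exact Finset.sum_le_sum fun t _ => hx1 t _
  have G3y : ∀ i, (k:ℝ) * (∑ t, y t (Sum.inl (Sum.inl i))) ≤ 2*(1+γ)*T := by
    intro i
    have h := K4 i
    rw [Finset.sum_sub_distrib, ← Finset.mul_sum, ← Finset.mul_sum] at h
    have h2 := mul_le_mul_of_nonneg_left h hTR.le
    rw [hTcancel] at h2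
    have h3 : (T:ℝ) * ER ≤ (1 + γ - r) * T :=
      by linarith only [mul_le_mul_of_nonneg_left G2R hTR.le]
    have h4 : r * ∑ t, yo t ≤ r * T :=
      mul_le_mul_of_nonneg_left hyoT (by linarith only [hr0])
    linarith only [h2, h3, h4]
  have G3x : ∀ i, (k:ℝ) * (∑ t, x t (Sum.inl (Sum.inl i))) ≤ 2*(1+γ)*T := by
    intro i
    have h := K5 i
    rw [Finset.sum_sub_distrib, ← Finset.mul_sum, ← Finset.mul_sum] at h
    have h2 := mul_le_mul_of_nonneg_left h hTR.le
    rw [hTcancel] at h2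
    have h3 : (T:ℝ) * EC ≤ (1 + γ - r) * T :=
      by linarith only [mul_le_mul_of_nonneg_left G2C hTR.le]
    have h4 : r * ∑ t, xo t ≤ r * T :=
      mul_le_mul_of_nonneg_left hxoT (by linarith only [hr0])
    linarith only [h2, h3, h4]
  -- G4/G5 : non-edge mass is small
  have hwel : 2*r*((T:ℝ) - Pp) ≤ Sp + γ*Dp := by linarith only [G1]
  have G5 : Np ≤ γ*Dp := by
    have e1 : 0 ≤ (2*r-1)*((T:ℝ)-Pp) :=
      mul_nonneg (by linarith only [h2r1]) (by linarith only [hPpT])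
    nlinarith only [hNpeq, hwel, e1, hMggPp, hPp0]
  have G5' : Np ≤ γ*T :=
    le_trans G5 (mul_le_mul_of_nonneg_left hDpT hγ.le)
  -- G6 : diagonal mass lower bound
  have G6 : (T:ℝ)*Mgg ≤ (k:ℝ)*Dp := by
    have q1 : (2*r-1)*((T:ℝ)-Pp) ≤ 2*r*((T:ℝ)-Pp) - Sp := by
      nlinarith only [hSpMgg, hMggPp]
    have q2 : (2*r-1)*((T:ℝ)-Pp) ≤ γ*Dp := by linarith only [hwel, q1]
    have q3 := mul_le_mul_of_nonneg_left q2 hkR.le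
    have q4 : (k:ℝ)*((2*r-1)*((T:ℝ)-Pp)) = γ*T*((T:ℝ)-Pp) := by
      linear_combination ((T:ℝ) - Pp) * hrk
    have q5 : γ*(T:ℝ)*Mgg ≤ γ*(T:ℝ)*((T:ℝ)-Pp) :=
      mul_le_mul_of_nonneg_left (by linarith only [hMggPp]) (by positivity)
    have e2 : γ*((T:ℝ)*Mgg) ≤ γ*((k:ℝ)*Dp) := by linarith only [q3, q4, q5]
    exact le_of_mul_le_mul_left e2 hγ
  -- G7 : near-complete components
  have hbody : (∑ t, (xg t + yg t - xg t * yg t)) ≤ (T:ℝ) - Pp := by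
    have h : ∀ t, xg t + yg t - xg t * yg t ≤ 1 - xo t * yo t := by
      intro t
      nlinarith only [hxoyo t]
    calc (∑ t, (xg t + yg t - xg t * yg t)) ≤ ∑ t, (1 - xo t * yo t) :=
          Finset.sum_le_sum fun t _ => h t
      _ = (T:ℝ) - Pp := by
          rw [Finset.sum_sub_distrib, hsumT, hPpdef]
  have G7 : (∑ t, (xg t + yg t - 2*(xg t * yg t))) ≤ γ*Mgg := by
    have hid : (∑ t, (xg t + yg t - 2*(xg t * yg t)))
        = (∑ t, (xg t + yg t - xg t * yg t)) - Mgg := by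
      rw [hMggdef, ← Finset.sum_sub_distrib]
      exact Finset.sum_congr rfl fun t _ => by ring
    have e0 : 0 ≤ (2*r-1)*((T:ℝ)-Pp) :=
      mul_nonneg (by linarith only [h2r1]) (by linarith only [hPpT])
    have h2 : (T:ℝ) - Pp ≤ 2*r*((T:ℝ)-Pp) := by nlinarith only [e0]
    have h3 : Sp + γ*Dp ≤ Mgg + γ*Mgg := by
      linarith only [hSpMgg, mul_le_mul_of_nonneg_left hDpMgg hγ.le]
    linarith only [hid, hbody, hwel, h2, h3]
  have G8 : ∀ t, xg t + yg t - 2*(xg t * yg t) ≤ γ*Mgg := by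
    intro t
    have hterm : ∀ t', 0 ≤ xg t' + yg t' - 2*(xg t' * yg t') := fun t' => by
      nlinarith only [mul_nonneg (hxg0 t') (sub_nonneg.mpr (hyg1 t')),
        mul_nonneg (hyg0 t') (sub_nonneg.mpr (hxg1 t'))]
    exact le_trans (Finset.single_le_sum (fun t' _ => hterm t') (Finset.mem_univ t)) G7
    -- the set of "big" components
  set B : Finset (Fin T) := Finset.univ.filter (fun t => (1:ℝ)/2 ≤ xg t ∧ (1:ℝ)/2 ≤ yg t)
    with hBdef
  have G9d : ∀ t, t ∉ B → dg t ≤ 2*γ*Mgg ∧ xg t * yg t ≤ 2*γ*Mgg := by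
    intro t ht
    have hcase : xg t < 1/2 ∨ yg t < 1/2 := by
      by_contra hc
      push_neg at hc
      exact ht (Finset.mem_filter.mpr ⟨Finset.mem_univ t, hc.1, hc.2⟩)
    rcases hcase with hcase | hcase
    · have e1 : yg t * (1 - xg t) ≤ γ*Mgg := by
        nlinarith only [G8 t, mul_nonneg (hxg0 t) (sub_nonneg.mpr (hyg1 t))]
      have p := mul_nonneg (hyg0 t) (by linarith only [hcase] : (0:ℝ) ≤ 1/2 - xg t)
      have e2 : yg t ≤ 2*γ*Mgg := by nlinarith only [e1, p]
      constructor
      · linarith only [hdgyg t, e2]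
      · nlinarith only [e2, mul_nonneg (sub_nonneg.mpr (hxg1 t)) (hyg0 t)]
    · have e1 : xg t * (1 - yg t) ≤ γ*Mgg := by
        nlinarith only [G8 t, mul_nonneg (hyg0 t) (sub_nonneg.mpr (hxg1 t))]
      have p := mul_nonneg (hxg0 t) (by linarith only [hcase] : (0:ℝ) ≤ 1/2 - yg t)
      have e2 : xg t ≤ 2*γ*Mgg := by nlinarith only [e1, p]
      constructor
      · linarith only [hdgxg t, e2]
      · nlinarith only [e2, mul_nonneg (sub_nonneg.mpr (hyg1 t)) (hxg0 t)]
  -- the distribution is not the point mass, so Pp < T and Mgg > 0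
  have hPplt : Pp < T := by
    by_contra hc
    push_neg at hc
    have ha1 : ∀ t, xo t ≤ 1 := fun t => by linarith only [hxo1 t, hxg0 t]
    have ha2 : ∀ t, yo t ≤ 1 := fun t => by linarith only [hyo1 t, hyg0 t]
    have hterm : ∀ t, 0 ≤ 1 - xo t * yo t := by
      intro t
      nlinarith only [mul_nonneg (sub_nonneg.mpr (ha1 t)) (hyo0 t), ha2 t, hxo0 t, hyo0 t]
    have hsum0 : ∑ t, (1 - xo t * yo t) = (T:ℝ) - Pp := by
      rw [Finset.sum_sub_distrib, hsumT, hPpdef]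
    have h0 : ∑ t, (1 - xo t * yo t) = 0 :=
      le_antisymm (by rw [hsum0]; linarith only [hc])
        (Finset.sum_nonneg fun t _ => hterm t)
    have hone : ∀ t, xo t * yo t = 1 := by
      intro t
      have := (Finset.sum_eq_zero_iff_of_nonneg (fun t _ => hterm t)).mp h0 t
        (Finset.mem_univ t)
      linarith only [this]
    have hxall : ∀ t, x t (Sum.inr ()) = 1 := by
      intro t
      have h1 : xo t = 1 := by
        nlinarith only [hone t, ha1 t, ha2 t, hxo0 t, hyo0 t,
          mul_nonneg (hxo0 t) (sub_nonneg.mpr (ha2 t))]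
      rw [hxodef] at h1
      exact h1
    have hyall : ∀ t, y t (Sum.inr ()) = 1 := by
      intro t
      have h1 : yo t = 1 := by
        nlinarith only [hone t, ha1 t, ha2 t, hxo0 t, hyo0 t,
          mul_nonneg (hyo0 t) (sub_nonneg.mpr (ha1 t))]
      rw [hyodef] at h1
      exact h1
    exact absurd (aux_pointmass hT (Sum.inr ()) x y hx hy hxall hyall) hne
  have hMggpos : 0 < Mgg := by
    by_contra hc
    push_neg at hc
    have e : 0 < 2*r*((T:ℝ)-Pp) :=
      mul_pos (by linarith only [h2r1]) (by linarith only [hPplt])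
    have e2 : Sp + γ*Dp ≤ Mgg + γ*Mgg := by
      linarith only [hSpMgg, mul_le_mul_of_nonneg_left hDpMgg hγ.le]
    have e3 : γ*Mgg ≤ 0 := by nlinarith only [hc, hγ.le]
    linarith only [e, hwel, e2, e3, hc]
  have hB : B.Nonempty := by
    by_contra hc
    rw [Finset.not_nonempty_iff_eq_empty] at hc
    have hall : ∀ t : Fin T, xg t * yg t ≤ 2*γ*Mgg := fun t =>
      (G9d t (by rw [hc]; exact Finset.notMem_empty t)).2
    have h1 : Mgg ≤ (T:ℝ)*(2*γ*Mgg) := by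
      rw [hMggdef]
      calc (∑ t, xg t * yg t) ≤ ∑ _t : Fin T, 2*γ*Mgg :=
            Finset.sum_le_sum fun t _ => hall t
        _ = (T:ℝ)*(2*γ*Mgg) := by
            rw [Finset.sum_const, Finset.card_univ, Fintype.card_fin, nsmul_eq_mul]
    nlinarith only [h1, hγT, hMggpos]
  -- components in B are nearly all on the graph block
  have hgm : γ*Mgg ≤ γ*(T:ℝ) := mul_le_mul_of_nonneg_left hMggT hγ.le
  have G11 : ∀ t ∈ B, 1-2*γ*(T:ℝ) ≤ xg t ∧ 1-2*γ*(T:ℝ) ≤ yg t := by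
    intro t ht
    obtain ⟨-, hx2, hy2⟩ := Finset.mem_filter.mp ht
    constructor
    · have e2 : 0 ≤ (yg t - 1/2)*(1 - xg t) :=
        mul_nonneg (by linarith only [hy2]) (by linarith only [hxg1 t])
      nlinarith only [G8 t, hgm, e2, mul_nonneg (hxg0 t) (sub_nonneg.mpr (hyg1 t))]
    · have e2 : 0 ≤ (xg t - 1/2)*(1 - yg t) :=
        mul_nonneg (by linarith only [hx2]) (by linarith only [hyg1 t])
      nlinarith only [G8 t, hgm, e2, mul_nonneg (hyg0 t) (sub_nonneg.mpr (hxg1 t))]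
  have h2γT0 : (0:ℝ) ≤ 1-2*γ*T := by linarith only [hγT]
  have G12 : ((B.card:ℝ))*(1-2*γ*(T:ℝ))^2 ≤ Mgg := by
    have h1 : ∑ t ∈ B, ((1-2*γ*(T:ℝ))^2) ≤ ∑ t ∈ B, xg t * yg t := by
      refine Finset.sum_le_sum fun t ht => ?_
      have h := G11 t ht
      nlinarith only [h.1, h.2, h2γT0]
    have h2 : ∑ t ∈ B, xg t * yg t ≤ Mgg := by
      rw [hMggdef]
      exact Finset.sum_le_sum_of_subset_of_nonneg (Finset.subset_univ B)
        (fun t _ _ => mul_nonneg (hxg0 t) (hyg0 t))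
    rw [Finset.sum_const, nsmul_eq_mul] at h1
    linarith only [h1, h2]
  have hcompl : ∑ t ∈ Bᶜ, dg t ≤ (T:ℝ)*(2*γ*(T:ℝ)) := by
    have h1 : ∀ t ∈ Bᶜ, dg t ≤ 2*γ*(T:ℝ) := by
      intro t ht
      have := (G9d t (Finset.mem_compl.mp ht)).1
      linarith only [this, hgm]
    calc (∑ t ∈ Bᶜ, dg t) ≤ ∑ _t ∈ Bᶜ, 2*γ*(T:ℝ) := Finset.sum_le_sum h1
      _ = ((Bᶜ.card : ℝ))*(2*γ*(T:ℝ)) := by rw [Finset.sum_const, nsmul_eq_mul]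
      _ ≤ (T:ℝ)*(2*γ*(T:ℝ)) := by
          have hcard : ((Bᶜ.card : ℝ)) ≤ (T:ℝ) := by
            have h2 : Bᶜ.card ≤ T := by simpa using Finset.card_le_univ (Bᶜ)
            exact_mod_cast h2
          apply mul_le_mul_of_nonneg_right hcard (by positivity)
  have hsplitB : (∑ t ∈ B, dg t) + ∑ t ∈ Bᶜ, dg t = Dp := by
    rw [hDpdef]
    exact Finset.sum_add_sum_compl B dg
  -- G14 : a component with large diagonal mass
  have G14 : ∃ t ∈ B, 7*(T:ℝ) ≤ 8*(k:ℝ)*dg t := by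
    by_contra hc
    push_neg at hc
    have hlt : ∑ t ∈ B, (8*(k:ℝ)*dg t) < ∑ _t ∈ B, 7*(T:ℝ) :=
      Finset.sum_lt_sum_of_nonempty hB (fun t ht => hc t ht)
    rw [Finset.sum_const, nsmul_eq_mul, ← Finset.mul_sum] at hlt
    have hm1 : (1:ℝ) ≤ (B.card:ℝ) := by
      exact_mod_cast Nat.one_le_cast.mpr (Finset.card_pos.mpr hB)
    have hDB : Dp - (T:ℝ)*(2*γ*(T:ℝ)) ≤ ∑ t ∈ B, dg t := by
      linarith only [hsplitB, hcompl]
    have d1 : 8*(k:ℝ)*(Dp - (T:ℝ)*(2*γ*(T:ℝ))) ≤ 8*(k:ℝ)*(∑ t ∈ B, dg t) :=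
      mul_le_mul_of_nonneg_left hDB (by positivity)
    have d2 : 8*(T:ℝ)*(((B.card:ℝ))*(1-2*γ*(T:ℝ))^2) ≤ 8*(T:ℝ)*Mgg :=
      mul_le_mul_of_nonneg_left G12 (by positivity)
    have d3 : 8*(T:ℝ)*Mgg ≤ 8*((k:ℝ)*Dp) :=
      by nlinarith only [G6]
    -- combine : 7 T m ≤ 8 k ∑_B dg < 7 T m, contradiction
    have t5 : 32*γ*(T:ℝ)^2*(B.card:ℝ) ≤ ((T:ℝ)*(B.card:ℝ))/2 := by
      have := mul_nonneg (by linarith only [hγT] : (0:ℝ) ≤ 1/64 - γ*T)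
        (by positivity : (0:ℝ) ≤ 32*(T:ℝ)*(B.card:ℝ))
      nlinarith only [this]
    have t6 : 16*γ*(k:ℝ)*(T:ℝ)^2 ≤ ((T:ℝ)*(B.card:ℝ))/2 := by
      have e1 : 16*γ*(k:ℝ)*(T:ℝ) ≤ 1/2 := by linarith only [hγkT]
      have e2 : (16*γ*(k:ℝ)*(T:ℝ))*(T:ℝ) ≤ (1/2)*(T:ℝ) :=
        mul_le_mul_of_nonneg_right e1 hTR.le
      have e3 : (1/2)*(T:ℝ) ≤ ((T:ℝ)*(B.card:ℝ))/2 := by nlinarith only [hm1, hTR]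
      nlinarith only [e2, e3]
    have t4 : 8*(T:ℝ)*(((B.card:ℝ))*(1-2*γ*(T:ℝ))^2)
        ≥ 8*(T:ℝ)*(B.card:ℝ) - 32*γ*(T:ℝ)^2*(B.card:ℝ) := by
      nlinarith only [mul_nonneg (mul_nonneg (mul_nonneg hγ.le hγ.le)
        (by positivity : (0:ℝ) ≤ (T:ℝ)^3)) (by linarith only [hm1] : (0:ℝ) ≤ (B.card:ℝ))]
    nlinarith only [hlt, d1, d2, d3, t4, t5, t6, hm1, hTR]
    -- extract the good component
  obtain ⟨t0, ht0B, ht0d⟩ := G14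
  have hnR0 : (0:ℝ) < n := by linarith only [hnR]
  have hax : ∀ i, (k:ℝ) * x t0 (Sum.inl (Sum.inl i)) ≤ 2*(1+γ)*(T:ℝ) := by
    intro i
    have h1 : x t0 (Sum.inl (Sum.inl i)) ≤ ∑ t, x t (Sum.inl (Sum.inl i)) :=
      Finset.single_le_sum (fun t _ => hx0 t _) (Finset.mem_univ t0)
    exact le_trans (mul_le_mul_of_nonneg_left h1 hkR.le) (G3x i)
  have hay : ∀ i, (k:ℝ) * y t0 (Sum.inl (Sum.inl i)) ≤ 2*(1+γ)*(T:ℝ) := by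
    intro i
    have h1 : y t0 (Sum.inl (Sum.inl i)) ≤ ∑ t, y t (Sum.inl (Sum.inl i)) :=
      Finset.single_le_sum (fun t _ => hy0 t _) (Finset.mem_univ t0)
    exact le_trans (mul_le_mul_of_nonneg_left h1 hkR.le) (G3y i)
  set η : ℝ := (T:ℝ)/(16*(k:ℝ)*(n:ℝ)) with hηdef
  have h16 : (0:ℝ) < 16*(k:ℝ)*(n:ℝ) :=
    mul_pos (mul_pos (by norm_num : (0:ℝ) < 16) hkR) hnR0
  have hη0 : 0 < η := by rw [hηdef]; exact div_pos hTR h16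
  set Q : Finset (Fin n) := Finset.univ.filter
    (fun i => η ≤ x t0 (Sum.inl (Sum.inl i)) ∧ η ≤ y t0 (Sum.inl (Sum.inl i))) with hQdef
  have hcomplQ : (∑ i ∈ Qᶜ, x t0 (Sum.inl (Sum.inl i)) * y t0 (Sum.inl (Sum.inl i)))
      ≤ (n:ℝ)*η := by
    have h1 : ∀ i ∈ Qᶜ, x t0 (Sum.inl (Sum.inl i)) * y t0 (Sum.inl (Sum.inl i)) ≤ η := by
      intro i hi
      have hni := Finset.mem_compl.mp hi
      have hcase : x t0 (Sum.inl (Sum.inl i)) < η ∨ y t0 (Sum.inl (Sum.inl i)) < η := by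
        by_contra hcc
        push_neg at hcc
        exact hni (Finset.mem_filter.mpr ⟨Finset.mem_univ i, hcc.1, hcc.2⟩)
      rcases hcase with hcase | hcase
      · have hp := mul_nonneg (hx0 t0 (Sum.inl (Sum.inl i)))
          (sub_nonneg.mpr (hy1 t0 (Sum.inl (Sum.inl i))))
        nlinarith only [hp, hcase]
      · have hp := mul_nonneg (sub_nonneg.mpr (hx1 t0 (Sum.inl (Sum.inl i))))
          (hy0 t0 (Sum.inl (Sum.inl i)))
        nlinarith only [hp, hcase]
    calc (∑ i ∈ Qᶜ, x t0 (Sum.inl (Sum.inl i)) * y t0 (Sum.inl (Sum.inl i)))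
        ≤ ∑ _i ∈ Qᶜ, η := Finset.sum_le_sum h1
      _ = ((Qᶜ.card : ℝ))*η := by rw [Finset.sum_const, nsmul_eq_mul]
      _ ≤ (n:ℝ)*η := by
          have h2 : Qᶜ.card ≤ n := by simpa using Finset.card_le_univ (Qᶜ)
          exact mul_le_mul_of_nonneg_right (by exact_mod_cast h2) hη0.le
  have hQsplit : (∑ i ∈ Q, x t0 (Sum.inl (Sum.inl i)) * y t0 (Sum.inl (Sum.inl i)))
      + (∑ i ∈ Qᶜ, x t0 (Sum.inl (Sum.inl i)) * y t0 (Sum.inl (Sum.inl i))) = dg t0 := by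
    rw [hdgdef]
    exact Finset.sum_add_sum_compl Q _
  have hnη : (n:ℝ)*η = (T:ℝ)/(16*(k:ℝ)) := by
    rw [hηdef]
    field_simp
  have hQlow : 13*(T:ℝ)
      ≤ 16*(k:ℝ)*(∑ i ∈ Q, x t0 (Sum.inl (Sum.inl i)) * y t0 (Sum.inl (Sum.inl i))) := by
    rw [hnη] at hcomplQ
    have e1 : 16*(k:ℝ)*((T:ℝ)/(16*(k:ℝ))) = T := by field_simp
    have e2 : dg t0 - (T:ℝ)/(16*(k:ℝ))
        ≤ ∑ i ∈ Q, x t0 (Sum.inl (Sum.inl i)) * y t0 (Sum.inl (Sum.inl i)) := by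
      linarith only [hQsplit, hcomplQ]
    have e3 := mul_le_mul_of_nonneg_left e2 (by positivity : (0:ℝ) ≤ 16*(k:ℝ))
    nlinarith only [e3, ht0d, e1]
  have hQup : (k:ℝ)^2*(∑ i ∈ Q, x t0 (Sum.inl (Sum.inl i)) * y t0 (Sum.inl (Sum.inl i)))
      ≤ ((Q.card:ℝ))*((2*(1+γ)*(T:ℝ))^2) := by
    have h1 : ∀ i ∈ Q, (k:ℝ)^2*(x t0 (Sum.inl (Sum.inl i)) * y t0 (Sum.inl (Sum.inl i)))
        ≤ (2*(1+γ)*(T:ℝ))^2 := by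
      intro i _
      have h2 := mul_le_mul (hax i) (hay i)
        (mul_nonneg hkR.le (hy0 t0 _)) (by positivity)
      nlinarith only [h2]
    calc (k:ℝ)^2*(∑ i ∈ Q, x t0 (Sum.inl (Sum.inl i)) * y t0 (Sum.inl (Sum.inl i)))
        = ∑ i ∈ Q, (k:ℝ)^2*(x t0 (Sum.inl (Sum.inl i)) * y t0 (Sum.inl (Sum.inl i))) := by
          rw [Finset.mul_sum]
      _ ≤ ∑ _i ∈ Q, (2*(1+γ)*(T:ℝ))^2 := Finset.sum_le_sum h1
      _ = ((Q.card:ℝ))*((2*(1+γ)*(T:ℝ))^2) := by rw [Finset.sum_const, nsmul_eq_mul]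
  have hQc0 : (0:ℝ) ≤ (Q.card:ℝ) := Nat.cast_nonneg _
  refine ⟨Q, ?_, ?_⟩
  · -- Q is a clique
    intro i hi j hj hij
    obtain ⟨-, hxi, hyi⟩ := Finset.mem_filter.mp (Finset.mem_coe.mp hi)
    obtain ⟨-, hxj, hyj⟩ := Finset.mem_filter.mp (Finset.mem_coe.mp hj)
    by_contra hadj
    have hAij : adjMat n G i j = 0 := by
      simp only [adjMat]
      rw [if_neg]
      rintro (h | h)
      · exact hij h
      · exact hadj h
    have hstep1 : x t0 (Sum.inl (Sum.inl i)) * y t0 (Sum.inl (Sum.inl j))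
          * (1 - adjMat n G i j)
        ≤ ∑ j', x t0 (Sum.inl (Sum.inl i)) * y t0 (Sum.inl (Sum.inl j'))
          * (1 - adjMat n G i j') :=
      Finset.single_le_sum (f := fun j' => x t0 (Sum.inl (Sum.inl i))
          * y t0 (Sum.inl (Sum.inl j')) * (1 - adjMat n G i j'))
        (fun j' _ => mul_nonneg
          (mul_nonneg (hx0 t0 _) (hy0 t0 _)) (by linarith only [hA1 i j']))
        (Finset.mem_univ j)
    have hstep2 : (∑ j', x t0 (Sum.inl (Sum.inl i)) * y t0 (Sum.inl (Sum.inl j'))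
          * (1 - adjMat n G i j')) ≤ NN t0 := by
      rw [hNNdef]
      exact Finset.single_le_sum (f := fun i' => ∑ j', x t0 (Sum.inl (Sum.inl i'))
          * y t0 (Sum.inl (Sum.inl j')) * (1 - adjMat n G i' j'))
        (fun i' _ => Finset.sum_nonneg fun j' _ =>
          mul_nonneg (mul_nonneg (hx0 t0 _) (hy0 t0 _)) (by linarith only [hA1 i' j']))
        (Finset.mem_univ i)
    have hNpb : NN t0 ≤ Np := by
      rw [hNpdef]
      exact Finset.single_le_sum (fun t _ => hNN0 t) (Finset.mem_univ t0)
    have hηη : η*η ≤ x t0 (Sum.inl (Sum.inl i)) * y t0 (Sum.inl (Sum.inl j)) :=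
      mul_le_mul hxi hyj hη0.le (le_trans hη0.le hxi)
    have hfin : γ*(T:ℝ) < η*η := by
      rw [hηdef, div_mul_div_comm, lt_div_iff₀ (mul_pos h16 h16)]
      nlinarith only [mul_lt_mul_of_pos_right hγη hTR]
    rw [hAij] at hstep1
    linarith only [hfin, hηη, hstep1, hstep2, hNpb, G5']
  · -- Q is large
    rw [div_le_iff₀ (by positivity : (0:ℝ) < 8*(T:ℝ))]
    have hsq : (1+γ)^2 ≤ 25/16 := by nlinarith only [hγ4, hγ.le]
    have h3 : ((Q.card:ℝ))*((2*(1+γ)*(T:ℝ))^2) ≤ (Q.card:ℝ)*((25/4)*(T:ℝ)^2) := by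
      refine mul_le_mul_of_nonneg_left ?_ hQc0
      nlinarith only [mul_nonneg (by linarith only [hsq] : (0:ℝ) ≤ 25/16 - (1+γ)^2)
        (sq_nonneg (T:ℝ))]
    have h4 := mul_le_mul_of_nonneg_left hQlow hkR.le
    nlinarith only [h4, hQup, h3, hTR, hkR, hQc0,
      mul_nonneg (mul_nonneg hQc0 hTR.le) hTR.le]
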